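/- arXiv:2006.15134 — 7 statements merged into one kernel-verified Lean document; each statement's English description precedes it below -/
import Mathlib

section
/- Let μ be a probability distribution on a finite action set A, Q : A → ℝ, β > 0, and define π(a) = exp(Q(a)/β) μ(a) / Z with Z = Σ_a exp(Q(a)/β) μ(a). Then Σ_a π(a) Q(a) ≥ Σ_a μ(a) Q(a), with equality iff Q is constant on the support of μ. -/
/-!
Chebyshev's correlation inequality: if `g` is an increasing function of `f` and `w ≥ 0`, then
`(∑ w) (∑ w g f) - (∑ w g) (∑ w f)` is half the double sum of the nonnegative terms
`w i w j (g i - g j) (f i - f j)`, so it vanishes exactly when `f` is constant on the support of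
`w`. The value gain `∑ π Q - ∑ μ Q` is this covariance for `g = exp (Q / β)`, divided by `Z > 0`.
-/

open Finset

lemma StrictMono.sub_mul_sub_pos {φ : ℝ → ℝ} (hφ : StrictMono φ) {x y : ℝ} (hxy : x ≠ y) :
    0 < (φ x - φ y) * (x - y) := by
  rcases hxy.lt_or_gt with h | h
  · exact mul_pos_of_neg_of_neg (sub_neg.2 (hφ h)) (sub_neg.2 h)
  · exact mul_pos (sub_pos.2 (hφ h)) (sub_pos.2 h)

lemma Monotone.sub_mul_sub_nonneg {φ : ℝ → ℝ} (hφ : Monotone φ) (x y : ℝ) :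
    0 ≤ (φ x - φ y) * (x - y) := by
  rcases le_total x y with h | h
  · exact mul_nonneg_of_nonpos_of_nonpos (sub_nonpos.2 (hφ h)) (sub_nonpos.2 h)
  · exact mul_nonneg (sub_nonneg.2 (hφ h)) (sub_nonneg.2 h)

section Chebyshev

variable {ι : Type*} [Fintype ι]

theorem two_mul_weighted_cov_eq_sum_sum (w f g : ι → ℝ) :
    2 * ((∑ i, w i) * (∑ i, w i * g i * f i) - (∑ i, w i * g i) * (∑ i, w i * f i)) =
      ∑ i, ∑ j, w i * w j * ((g i - g j) * (f i - f j)) := by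
  have expand : ∀ i j, w i * w j * ((g i - g j) * (f i - f j)) =
      w i * g i * f i * w j - w i * g i * (w j * f j) - w i * f i * (w j * g j) +
        w i * (w j * g j * f j) := fun i j => by ring
  simp only [expand, sum_add_distrib, sum_sub_distrib, ← mul_sum, ← sum_mul]
  ring

variable {w : ι → ℝ} {φ : ℝ → ℝ}

theorem sum_sum_mul_sub_mul_sub_nonneg (hw : ∀ i, 0 ≤ w i) (hφ : Monotone φ) (f : ι → ℝ) :
    0 ≤ ∑ i, ∑ j, w i * w j * ((φ (f i) - φ (f j)) * (f i - f j)) :=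
  sum_nonneg fun i _ => sum_nonneg fun j _ =>
    mul_nonneg (mul_nonneg (hw i) (hw j)) (hφ.sub_mul_sub_nonneg _ _)

theorem sum_sum_mul_sub_mul_sub_eq_zero_iff (hw : ∀ i, 0 ≤ w i) (hφ : StrictMono φ)
    (f : ι → ℝ) :
    ∑ i, ∑ j, w i * w j * ((φ (f i) - φ (f j)) * (f i - f j)) = 0 ↔
      ∀ i j, 0 < w i → 0 < w j → f i = f j := by
  have term_nonneg : ∀ i j, 0 ≤ w i * w j * ((φ (f i) - φ (f j)) * (f i - f j)) := fun i j =>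
    mul_nonneg (mul_nonneg (hw i) (hw j)) (hφ.monotone.sub_mul_sub_nonneg _ _)
  rw [sum_eq_zero_iff_of_nonneg fun i _ => sum_nonneg fun j _ => term_nonneg i j]
  simp only [sum_eq_zero_iff_of_nonneg fun j _ => term_nonneg _ j, mem_univ, true_implies]
  refine forall_congr' fun i => forall_congr' fun j => ⟨fun h hi hj => ?_, fun h => ?_⟩
  · by_contra hne
    exact (mul_pos (mul_pos hi hj) (hφ.sub_mul_sub_pos hne)).ne' h
  · rcases (hw i).eq_or_lt with hi | hi
    · simp [← hi]
    rcases (hw j).eq_or_lt with hj | hj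
    · simp [← hj]
    simp [h hi hj]

end Chebyshev

theorem crr_exp_value_improvement {A : Type*} [Fintype A]
    (μ : A → ℝ) (hμ0 : ∀ a, 0 ≤ μ a) (hμ1 : ∑ a, μ a = 1)
    (Q : A → ℝ) (β : ℝ) (hβ : 0 < β)
    (Z : ℝ) (hZ : Z = ∑ a, Real.exp (Q a / β) * μ a)
    (π : A → ℝ)
    (hπ : ∀ a, π a = Real.exp (Q a / β) * μ a / Z) :
    (∑ a, π a * Q a ≥ ∑ a, μ a * Q a) ∧
      (∑ a, π a * Q a = ∑ a, μ a * Q a ↔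
        ∀ a b, 0 < μ a → 0 < μ b → Q a = Q b) := by
  have hφ : StrictMono fun x => Real.exp (x / β) :=
    Real.exp_strictMono.comp (strictMono_div_right_of_pos hβ)
  obtain ⟨a₀, -, ha₀⟩ := exists_lt_of_sum_lt (by simp [hμ1] : ∑ _ : A, (0 : ℝ) < ∑ a, μ a)
  have hZpos : 0 < Z := hZ ▸ sum_pos' (fun a _ => mul_nonneg (Real.exp_pos _).le (hμ0 a))
    ⟨a₀, mem_univ a₀, mul_pos (Real.exp_pos _) ha₀⟩
  have gain : 2 * Z * (∑ a, π a * Q a - ∑ a, μ a * Q a) =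
      ∑ a, ∑ b, μ a * μ b * ((Real.exp (Q a / β) - Real.exp (Q b / β)) * (Q a - Q b)) := by
    have hπQ : ∑ a, π a * Q a = (∑ a, μ a * Real.exp (Q a / β) * Q a) / Z := by
      simp only [hπ, sum_div]
      exact sum_congr rfl fun a _ => by ring
    have hZ' : Z = ∑ a, μ a * Real.exp (Q a / β) :=
      hZ.trans (sum_congr rfl fun a _ => mul_comm _ _)
    rw [← two_mul_weighted_cov_eq_sum_sum, hμ1, hπQ, ← hZ']
    field_simp
  constructor
  · have := sum_sum_mul_sub_mul_sub_nonneg hμ0 hφ.monotone Q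
    rw [← gain] at this
    exact sub_nonneg.1 (nonneg_of_mul_nonneg_right this (by positivity))
  · rw [← sum_sum_mul_sub_mul_sub_eq_zero_iff hμ0 hφ Q, ← gain, ← sub_eq_zero]
    simp [hZpos.ne']
end

section
/- Let M be a finite discounted MDP with discount γ ∈ [0,1) and policy π. For each state s, let V = V^π(s) and suppose the set {a : Q^π(s,a) ≥ V^π(s)} has positive probability under π(·|s). Define π'(a|s) = 𝟙[Q^π(s,a) ≥ V^π(s)] π(a|s) / Z(s). Then V^{π'}(s) ≥ V^π(s) for all s, and Q^{π'}(s,a) ≥ Q^π(s,a) for all (s,a). -/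
/-!
Write `D = V' - V`. Since `π'` only charges actions with `V s ≤ Qπ s a`, the Bellman equations
give `D s ≥ ∑ a, π' s a * (Qπ' s a - Qπ s a) = γ * ∑ a, π' s a * ∑ s', P s a s' * D s'`,
so every lower bound `c` of `D` yields the lower bound `γ * c`. At a minimiser this forces
`min D ≤ γ * min D`, hence `D ≥ 0` because `γ < 1`, and then `Qπ' - Qπ = γ • P D ≥ 0`.
-/

open Finset

theorem le_sum_mul_of_le_of_pos {ι : Type*} [Fintype ι] {w f : ι → ℝ} {c : ℝ}
    (hw0 : ∀ i, 0 ≤ w i) (hw1 : ∑ i, w i = 1)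
    (h : ∀ i, 0 < w i → c ≤ f i) : c ≤ ∑ i, w i * f i := by
  calc c = ∑ i, w i * c := by rw [← sum_mul, hw1, one_mul]
    _ ≤ ∑ i, w i * f i := by
      refine sum_le_sum fun i _ => ?_
      rcases (hw0 i).eq_or_lt with hzero | hpos
      · simp [← hzero]
      · exact mul_le_mul_of_nonneg_left (h i hpos) hpos.le

section FilteredRenormalization

variable {ι : Type*} (p : ι → Prop) [DecidablePred p] (w : ι → ℝ) {Z : ℝ}

theorem filterRenorm_nonneg (hw : ∀ i, 0 ≤ w i) (hZ : 0 ≤ Z) (i : ι) :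
    0 ≤ (if p i then (1 : ℝ) else 0) * w i / Z := by
  split_ifs <;> simp [div_nonneg (hw i) hZ]

theorem sum_filterRenorm [Fintype ι] (hZ : Z = ∑ i, (if p i then (1 : ℝ) else 0) * w i)
    (hZ0 : Z ≠ 0) :
    ∑ i, (if p i then (1 : ℝ) else 0) * w i / Z = 1 := by
  rw [← sum_div, ← hZ, div_self hZ0]

theorem of_filterRenorm_pos {i : ι} (h : 0 < (if p i then (1 : ℝ) else 0) * w i / Z) : p i := by
  by_contra hp
  simp [hp] at h

end FilteredRenormalization

theorem nonneg_of_forall_lowerBound_mul {S : Type*} [Finite S] {γ : ℝ} (hγ1 : γ < 1)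
    (D : S → ℝ) (h : ∀ c, (∀ s, c ≤ D s) → ∀ s, γ * c ≤ D s) (s : S) : 0 ≤ D s := by
  have : Nonempty S := ⟨s⟩
  obtain ⟨s₀, hmin⟩ := Finite.exists_min D
  have hγmin : γ * D s₀ ≤ D s₀ := h (D s₀) hmin s₀
  have hmin_nonneg : 0 ≤ D s₀ := by nlinarith
  exact hmin_nonneg.trans (hmin s)

theorem crr_binary_policy_improvement_general {S A : Type*} [Fintype S] [Fintype A]
    (P : S → A → S → ℝ) (hP0 : ∀ s a s', 0 ≤ P s a s') (hP1 : ∀ s a, ∑ s', P s a s' = 1)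
    (r : S → A → ℝ) (γ : ℝ) (hγ0 : 0 ≤ γ) (hγ1 : γ < 1)
    (π : S → A → ℝ) (hπ0 : ∀ s a, 0 ≤ π s a)
    (Qπ : S → A → ℝ) (V : S → ℝ)
    (hBellπ : ∀ s a, Qπ s a = r s a + γ * ∑ s', P s a s' * V s')
    (Z : S → ℝ) (hZ : ∀ s, Z s = ∑ a, (if V s ≤ Qπ s a then (1 : ℝ) else 0) * π s a)
    (hZpos : ∀ s, 0 < Z s)
    (π' : S → A → ℝ)
    (hπ' : ∀ s a, π' s a = (if V s ≤ Qπ s a then (1 : ℝ) else 0) * π s a / Z s)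
    (Qπ' : S → A → ℝ) (V' : S → ℝ)
    (hV' : ∀ s, V' s = ∑ a, π' s a * Qπ' s a)
    (hBellπ' : ∀ s a, Qπ' s a = r s a + γ * ∑ s', P s a s' * V' s') :
    (∀ s, V' s ≥ V s) ∧ (∀ s a, Qπ' s a ≥ Qπ s a) := by
  have hπ'0 (s a) : 0 ≤ π' s a := by
    rw [hπ']
    exact filterRenorm_nonneg (fun a => V s ≤ Qπ s a) _ (hπ0 s) (hZpos s).le a
  have hπ'1 (s) : ∑ a, π' s a = 1 := by
    simpa only [hπ'] using sum_filterRenorm _ _ (hZ s) (hZpos s).ne'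
  have hgreedy (s) : V s ≤ ∑ a, π' s a * Qπ s a :=
    le_sum_mul_of_le_of_pos (hπ'0 s) (hπ'1 s) fun a ha =>
      of_filterRenorm_pos (fun a => V s ≤ Qπ s a) _ (hπ' s a ▸ ha)
  have hQgap (s a) : Qπ' s a - Qπ s a = γ * ∑ s', P s a s' * (V' s' - V s') := by
    simp only [hBellπ', hBellπ, mul_sub, sum_sub_distrib]
    ring
  have hQbound (c) (hc : ∀ s, c ≤ V' s - V s) (s a) : γ * c ≤ Qπ' s a - Qπ s a :=
    hQgap s a ▸ mul_le_mul_of_nonneg_left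
      (le_sum_mul_of_le_of_pos (hP0 s a) (hP1 s a) fun s' _ => hc s') hγ0
  have hVbound (c) (hc : ∀ s, c ≤ V' s - V s) (s) : γ * c ≤ V' s - V s := by
    have hstep : γ * c ≤ ∑ a, π' s a * (Qπ' s a - Qπ s a) :=
      le_sum_mul_of_le_of_pos (hπ'0 s) (hπ'1 s) fun a _ => hQbound c hc s a
    simp only [mul_sub, sum_sub_distrib, ← hV'] at hstep
    linarith [hgreedy s]
  have hVgap := nonneg_of_forall_lowerBound_mul hγ1 _ hVbound
  refine ⟨fun s => by linarith [hVgap s], fun s a => ?_⟩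
  simpa [sub_nonneg] using hQbound 0 hVgap s a

/-- Tabular CRR binary policy improvement. -/
theorem crr_binary_policy_improvement {S A : Type*} [Fintype S] [Fintype A]
    (P : S → A → S → ℝ) (hP0 : ∀ s a s', 0 ≤ P s a s') (hP1 : ∀ s a, ∑ s', P s a s' = 1)
    (r : S → A → ℝ) (γ : ℝ) (hγ0 : 0 ≤ γ) (hγ1 : γ < 1)
    (π : S → A → ℝ) (hπ0 : ∀ s a, 0 ≤ π s a) (hπ1 : ∀ s, ∑ a, π s a = 1)
    (Qπ : S → A → ℝ) (V : S → ℝ)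
    (hV : ∀ s, V s = ∑ a, π s a * Qπ s a)
    (hBellπ : ∀ s a, Qπ s a = r s a + γ * ∑ s', P s a s' * V s')
    (Z : S → ℝ) (hZ : ∀ s, Z s = ∑ a, (if V s ≤ Qπ s a then (1 : ℝ) else 0) * π s a)
    (hZpos : ∀ s, 0 < Z s)
    (π' : S → A → ℝ)
    (hπ' : ∀ s a, π' s a = (if V s ≤ Qπ s a then (1 : ℝ) else 0) * π s a / Z s)
    (Qπ' : S → A → ℝ) (V' : S → ℝ)
    (hV' : ∀ s, V' s = ∑ a, π' s a * Qπ' s a)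
    (hBellπ' : ∀ s a, Qπ' s a = r s a + γ * ∑ s', P s a s' * V' s') :
    (∀ s, V' s ≥ V s) ∧ (∀ s a, Qπ' s a ≥ Qπ s a) :=
  crr_binary_policy_improvement_general P hP0 hP1 r γ hγ0 hγ1 π hπ0 Qπ V hBellπ Z hZ hZpos π' hπ'
    Qπ' V' hV' hBellπ'
end

section
/- Let M be a finite discounted MDP with γ ∈ [0,1), π a policy, and β > 0. Define π'(a|s) = exp(Q^π(s,a)/β) π(a|s) / Z(s) with Z(s) the per-state normalizer. Then Q^{π'}(s,a) ≥ Q^π(s,a) for all (s,a). -/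
open Finset

/-!
Tilting π by `exp (Q^π / β)`, an increasing function of `Q^π`, can only move weight towards actions
with larger `Q^π`: by the weighted Chebyshev sum inequality, the π'-average of `Q^π` at every state
dominates `V^π`. The policy improvement argument turns this one-step gain into `Q^{π'} ≥ Q^π`: by
the Bellman equations the minimum `m` of `Q^{π'} - Q^π` satisfies `m ≥ γ m`, hence `m ≥ 0`.
-/

theorem Monovary.sum_mul_sum_le_sum_weight_mul_sum {ι R : Type*} [CommRing R] [LinearOrder R]
    [IsStrictOrderedRing R] {s : Finset ι} {w f g : ι → R} (hw : ∀ i ∈ s, 0 ≤ w i)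
    (hfg : Monovary f g) :
    (∑ i ∈ s, w i * f i) * (∑ i ∈ s, w i * g i) ≤ (∑ i ∈ s, w i) * ∑ i ∈ s, w i * (f i * g i) := by
  have hsum : 0 ≤ ∑ i ∈ s, ∑ j ∈ s, w i * w j * ((f i - f j) * (g i - g j)) :=
    sum_nonneg fun i hi => sum_nonneg fun j hj =>
      mul_nonneg (mul_nonneg (hw i hi) (hw j hj)) (hfg.sub_mul_sub_nonneg j i)
  have hexpand : ∑ i ∈ s, ∑ j ∈ s, w i * w j * ((f i - f j) * (g i - g j)) =
      2 * ((∑ i ∈ s, w i) * (∑ i ∈ s, w i * (f i * g i)) -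
        (∑ i ∈ s, w i * f i) * (∑ i ∈ s, w i * g i)) := by
    have hterm : ∀ i j, w i * w j * ((f i - f j) * (g i - g j)) =
        w i * (w j * (f j * g j)) + w j * (w i * (f i * g i)) -
          w i * f i * (w j * g j) - w j * f j * (w i * g i) := fun i j => by ring
    simp only [hterm, sum_sub_distrib, sum_add_distrib, ← mul_sum, ← sum_mul]
    ring
  linarith

section Tilt

variable {ι : Type*} [Fintype ι] {w h q : ι → ℝ}

lemma sum_mul_pos_of_pos_of_sum_pos (hh : ∀ i, 0 < h i) (hw0 : ∀ i, 0 ≤ w i)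
    (hw : 0 < ∑ i, w i) : 0 < ∑ i, h i * w i := by
  obtain ⟨i, hi, hwi⟩ := (sum_pos_iff_of_nonneg fun i _ => hw0 i).1 hw
  exact (sum_pos_iff_of_nonneg fun j _ => mul_nonneg (hh j).le (hw0 j)).2
    ⟨i, hi, mul_pos (hh i) hwi⟩

lemma sum_mul_le_sum_tilt_mul (hw0 : ∀ i, 0 ≤ w i) (hw1 : ∑ i, w i = 1) (hhq : Monovary h q)
    (hZ : 0 < ∑ i, h i * w i) :
    ∑ i, w i * q i ≤ ∑ i, h i * w i / (∑ j, h j * w j) * q i := by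
  have hcheb := hhq.sum_mul_sum_le_sum_weight_mul_sum (s := univ) fun i _ => hw0 i
  simp only [hw1, one_mul] at hcheb
  simp only [div_mul_eq_mul_div, ← sum_div]
  rw [le_div_iff₀ hZ]
  calc (∑ i, w i * q i) * ∑ j, h j * w j = (∑ i, w i * h i) * ∑ i, w i * q i := by
        simp only [mul_comm (h _)]; ring
    _ ≤ ∑ i, w i * (h i * q i) := hcheb
    _ = ∑ i, h i * w i * q i := sum_congr rfl fun i _ => by ring

end Tilt

lemma le_sum_mul_of_forall_le {ι : Type*} [Fintype ι] {w f : ι → ℝ} {m : ℝ}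
    (hw0 : ∀ i, 0 ≤ w i) (hw1 : ∑ i, w i = 1) (hf : ∀ i, m ≤ f i) : m ≤ ∑ i, w i * f i :=
  calc m = ∑ i, w i * m := by rw [← sum_mul, hw1, one_mul]
    _ ≤ ∑ i, w i * f i := sum_le_sum fun i _ => mul_le_mul_of_nonneg_left (hf i) (hw0 i)

section PolicyImprovement

variable {S A : Type*} [Fintype S] [Fintype A] {P : S → A → S → ℝ} {r : S → A → ℝ} {γ : ℝ}
  {π π' Q Q' : S → A → ℝ}

lemma mul_le_sub_of_forall_le_sub (hP0 : ∀ s a s', 0 ≤ P s a s') (hP1 : ∀ s a, ∑ s', P s a s' = 1)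
    (hγ0 : 0 ≤ γ) (hπ'0 : ∀ s a, 0 ≤ π' s a) (hπ'1 : ∀ s, ∑ a, π' s a = 1)
    (hQ : ∀ s a, Q s a = r s a + γ * ∑ s', P s a s' * ∑ a', π s' a' * Q s' a')
    (hQ' : ∀ s a, Q' s a = r s a + γ * ∑ s', P s a s' * ∑ a', π' s' a' * Q' s' a')
    (himp : ∀ s, ∑ a, π s a * Q s a ≤ ∑ a, π' s a * Q s a)
    {m : ℝ} (hm : ∀ s a, m ≤ Q' s a - Q s a) (s : S) (a : A) :
    γ * m ≤ Q' s a - Q s a := by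
  have hstate : ∀ s', m ≤ ∑ a', π' s' a' * Q' s' a' - ∑ a', π s' a' * Q s' a' := fun s' =>
    calc m ≤ ∑ a', π' s' a' * (Q' s' a' - Q s' a') :=
          le_sum_mul_of_forall_le (hπ'0 s') (hπ'1 s') (hm s')
      _ = ∑ a', π' s' a' * Q' s' a' - ∑ a', π' s' a' * Q s' a' := by
          simp only [mul_sub, sum_sub_distrib]
      _ ≤ _ := sub_le_sub_left (himp s') _
  have hdiff : Q' s a - Q s a =
      γ * ∑ s', P s a s' * (∑ a', π' s' a' * Q' s' a' - ∑ a', π s' a' * Q s' a') := by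
    rw [hQ' s a, hQ s a]
    simp only [mul_sub, sum_sub_distrib]
    ring
  rw [hdiff]
  exact mul_le_mul_of_nonneg_left (le_sum_mul_of_forall_le (hP0 s a) (hP1 s a) hstate) hγ0

theorem policy_improvement (hP0 : ∀ s a s', 0 ≤ P s a s') (hP1 : ∀ s a, ∑ s', P s a s' = 1)
    (hγ0 : 0 ≤ γ) (hγ1 : γ < 1) (hπ'0 : ∀ s a, 0 ≤ π' s a) (hπ'1 : ∀ s, ∑ a, π' s a = 1)
    (hQ : ∀ s a, Q s a = r s a + γ * ∑ s', P s a s' * ∑ a', π s' a' * Q s' a')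
    (hQ' : ∀ s a, Q' s a = r s a + γ * ∑ s', P s a s' * ∑ a', π' s' a' * Q' s' a')
    (himp : ∀ s, ∑ a, π s a * Q s a ≤ ∑ a, π' s a * Q s a) (s : S) (a : A) :
    Q s a ≤ Q' s a := by
  have : Nonempty (S × A) := ⟨(s, a)⟩
  obtain ⟨⟨s₀, a₀⟩, hmin⟩ := Finite.exists_min fun p : S × A => Q' p.1 p.2 - Q p.1 p.2
  have hcontract := mul_le_sub_of_forall_le_sub hP0 hP1 hγ0 hπ'0 hπ'1 hQ hQ' himp
    (fun s a => hmin (s, a)) s₀ a₀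
  have hmin_nonneg : 0 ≤ Q' s₀ a₀ - Q s₀ a₀ := by nlinarith
  linarith [hmin (s, a)]

end PolicyImprovement

/-- Tabular CRR exp policy improvement. -/
theorem crr_exp_policy_improvement {S A : Type*} [Fintype S] [Fintype A]
    (P : S → A → S → ℝ) (hP0 : ∀ s a s', 0 ≤ P s a s') (hP1 : ∀ s a, ∑ s', P s a s' = 1)
    (r : S → A → ℝ) (γ : ℝ) (hγ0 : 0 ≤ γ) (hγ1 : γ < 1)
    (β : ℝ) (hβ : 0 < β)
    (π : S → A → ℝ) (hπ0 : ∀ s a, 0 ≤ π s a) (hπ1 : ∀ s, ∑ a, π s a = 1)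
    (Qπ : S → A → ℝ)
    (hBellπ : ∀ s a, Qπ s a = r s a + γ * ∑ s', P s a s' * ∑ a', π s' a' * Qπ s' a')
    (Z : S → ℝ) (hZ : ∀ s, Z s = ∑ a, Real.exp (Qπ s a / β) * π s a)
    (π' : S → A → ℝ)
    (hπ' : ∀ s a, π' s a = Real.exp (Qπ s a / β) * π s a / Z s)
    (Qπ' : S → A → ℝ)
    (hBellπ' : ∀ s a, Qπ' s a = r s a + γ * ∑ s', P s a s' * ∑ a', π' s' a' * Qπ' s' a') :
    ∀ s a, Qπ' s a ≥ Qπ s a := by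
  have hZpos : ∀ s, 0 < Z s := fun s => hZ s ▸
    sum_mul_pos_of_pos_of_sum_pos (fun a => Real.exp_pos _) (hπ0 s) (hπ1 s ▸ one_pos)
  have hπ'0 : ∀ s a, 0 ≤ π' s a := fun s a => hπ' s a ▸
    div_nonneg (mul_nonneg (Real.exp_pos _).le (hπ0 s a)) (hZpos s).le
  have hπ'1 : ∀ s, ∑ a, π' s a = 1 := fun s => by
    simp only [hπ' s, ← sum_div, ← hZ s, div_self (hZpos s).ne']
  have hexp_monovary : ∀ s, Monovary (fun a => Real.exp (Qπ s a / β)) (Qπ s) := fun s =>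
    (monovary_self (Qπ s)).comp_monotone_left fun x y hxy =>
      Real.exp_le_exp.2 (div_le_div_of_nonneg_right hxy hβ.le)
  have himp : ∀ s, ∑ a, π s a * Qπ s a ≤ ∑ a, π' s a * Qπ s a := fun s => by
    simpa only [hπ' s, hZ s] using
      sum_mul_le_sum_tilt_mul (hπ0 s) (hπ1 s) (hexp_monovary s) (hZ s ▸ hZpos s)
  exact policy_improvement hP0 hP1 hγ0 hγ1 hπ'0 hπ'1 hBellπ hBellπ' himp
end

section
/- In a two-armed bandit where arm 1 yields reward 0 or 1 each with probability 1/2 (mean 1/2) and arm 2 yields deterministic reward 0.9, let the behavior policy be μ(arm1) = 2/3, μ(arm2) = 1/3. Let V = Σ_a μ(a)·E[R|a] be the behavior value. For any temperature β > 0, the return-weighted policy π(a) ∝ E_{R∼a}[exp((R − V)/β)]·μ(a) satisfies π(arm1) > π(arm2), even though arm 2 has strictly higher expected reward. -/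
/-! Arm 1's expected weight contains the term `(1/2) exp ((1 - V) / β)` from its best outcome,
and `1 > 0.9` makes `exp ((1 - V) / β)` exceed arm 2's weight `exp ((0.9 - V) / β)`;
the behavior probability `2/3 = 2 · (1/3)` exactly compensates the factor `1/2`. -/

open Real

theorem exp_div_lt_exp_div_add_exp_div {β c d : ℝ} (hβ : 0 < β) (hcd : c < d) (a : ℝ) :
    exp (c / β) < exp (a / β) + exp (d / β) := by
  have hmono : exp (c / β) < exp (d / β) := exp_lt_exp.2 (div_lt_div_of_pos_right hcd hβ)
  linarith [exp_pos (a / β)]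

theorem return_weighting_favors_inferior_arm_general
    (β : ℝ) (hβ : 0 < β)
    (V : ℝ)
    (w₁ w₂ : ℝ)
    (hw₁ : w₁ = (1/2 : ℝ) * (Real.exp ((0 - V) / β) + Real.exp ((1 - V) / β)))
    (hw₂ : w₂ = Real.exp (((0.9 : ℝ) - V) / β))
    (Z : ℝ) (hZ : Z = (2/3 : ℝ) * w₁ + (1/3 : ℝ) * w₂)
    (π₁ π₂ : ℝ) (hπ₁ : π₁ = (2/3 : ℝ) * w₁ / Z) (hπ₂ : π₂ = (1/3 : ℝ) * w₂ / Z) :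
    π₁ > π₂ ∧ (0.9 : ℝ) > (1/2 : ℝ) := by
  have hw₂_lt : w₂ < 2 * w₁ := by
    rw [hw₁, hw₂]
    linarith [exp_div_lt_exp_div_add_exp_div hβ (by norm_num : (0.9 : ℝ) - V < 1 - V) (0 - V)]
  have hw₂_pos : 0 < w₂ := hw₂ ▸ exp_pos _
  have hZ_pos : 0 < Z := by rw [hZ]; linarith
  refine ⟨?_, by norm_num⟩
  rw [hπ₁, hπ₂]
  exact div_lt_div_of_pos_right (by linarith) hZ_pos

/-- In the two-armed bandit (arm 1: Bernoulli(1/2) reward in {0,1};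
arm 2: deterministic 0.9; behavior μ = (2/3, 1/3); V = 0.6), return-based
exponential advantage weighting favors the inferior arm 1 for every β > 0. -/
theorem return_weighting_favors_inferior_arm
    (β : ℝ) (hβ : 0 < β)
    (V : ℝ) (hV : V = (2/3 : ℝ) * (1/2) + (1/3 : ℝ) * (0.9 : ℝ))
    (w₁ w₂ : ℝ)
    (hw₁ : w₁ = (1/2 : ℝ) * (Real.exp ((0 - V) / β) + Real.exp ((1 - V) / β)))
    (hw₂ : w₂ = Real.exp (((0.9 : ℝ) - V) / β))
    (Z : ℝ) (hZ : Z = (2/3 : ℝ) * w₁ + (1/3 : ℝ) * w₂)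
    (π₁ π₂ : ℝ) (hπ₁ : π₁ = (2/3 : ℝ) * w₁ / Z) (hπ₂ : π₂ = (1/3 : ℝ) * w₂ / Z) :
    π₁ > π₂ ∧ (0.9 : ℝ) > (1/2 : ℝ) :=
  return_weighting_favors_inferior_arm_general β hβ V w₁ w₂ hw₁ hw₂ Z hZ π₁ π₂ hπ₁ hπ₂
end

section
/- Let π be a policy on a finite MDP and π̄ the CWP policy π̄(a|s) = exp(Q^π(s,a)/β) π(a|s) / Z(s). Then for every state s, Σ_a π̄(a|s) Q^π(s,a) ≥ V^π(s), i.e., one-step CWP reweighting at execution time does not decrease the expected Q-value under the current critic. -/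
/-!
Under `π(·|s)` the weight `exp (Q/β)` is a monotone function of `Q`, so the two are positively
correlated: this is the weighted Chebyshev sum inequality, which follows from the symmetrisation
`∑ᵢ ∑ⱼ wᵢ wⱼ (fⱼ - fᵢ) (gⱼ - gᵢ) ≥ 0`. Dividing the correlation inequality by
`Z = ∑ₐ π(a|s) exp (Q/β)` gives `E_π̄[Q] ≥ E_π[Q] = V`.
-/

open Finset

theorem MonovaryOn.sum_mul_sum_le_sum_mul_sum {ι R : Type*} [CommRing R] [LinearOrder R]
    [IsStrictOrderedRing R] {s : Finset ι} {w f g : ι → R} (hw : ∀ i ∈ s, 0 ≤ w i)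
    (hfg : MonovaryOn f g s) :
    (∑ i ∈ s, w i * f i) * ∑ i ∈ s, w i * g i ≤ (∑ i ∈ s, w i) * ∑ i ∈ s, w i * (f i * g i) := by
  have hpairs : 0 ≤ ∑ i ∈ s, ∑ j ∈ s, w i * w j * ((f j - f i) * (g j - g i)) :=
    sum_nonneg fun i hi => sum_nonneg fun j hj =>
      mul_nonneg (mul_nonneg (hw i hi) (hw j hj)) (hfg.sub_mul_sub_nonneg hi hj)
  have hexpand : ∑ i ∈ s, ∑ j ∈ s, w i * w j * ((f j - f i) * (g j - g i)) =
      2 * ((∑ i ∈ s, w i) * ∑ i ∈ s, w i * (f i * g i)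
        - (∑ i ∈ s, w i * f i) * ∑ i ∈ s, w i * g i) := by
    have hterm : ∀ i j, w i * w j * ((f j - f i) * (g j - g i)) =
        w i * (w j * (f j * g j)) + w i * (f i * g i) * w j
          - w i * f i * (w j * g j) - w i * g i * (w j * f j) := fun i j => by ring
    simp only [hterm, sum_add_distrib, sum_sub_distrib, ← mul_sum, ← sum_mul]
    ring
  linarith

/-- One-step CWP reweighting does not decrease the expected Q-value under the
current critic, at every state. -/
theorem cwp_one_step_improvement {S A : Type*} [Fintype A]
    (π : S → A → ℝ) (hπ0 : ∀ s a, 0 ≤ π s a) (hπ1 : ∀ s, ∑ a, π s a = 1)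
    (Q : S → A → ℝ) (β : ℝ) (hβ : 0 < β)
    (V : S → ℝ) (hV : ∀ s, V s = ∑ a, π s a * Q s a)
    (Z : S → ℝ) (hZ : ∀ s, Z s = ∑ a, Real.exp (Q s a / β) * π s a)
    (πbar : S → A → ℝ)
    (hπbar : ∀ s a, πbar s a = Real.exp (Q s a / β) * π s a / Z s) :
    ∀ s, ∑ a, πbar s a * Q s a ≥ V s := by
  intro s
  have hZ_pos : 0 < Z s := by
    obtain ⟨a, -, ha⟩ : ∃ a ∈ univ, (0 : ℝ) < π s a :=
      exists_lt_of_sum_lt (by simp [hπ1 s])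
    rw [hZ]
    exact sum_pos' (fun b _ => mul_nonneg (Real.exp_pos _).le (hπ0 s b))
      ⟨a, mem_univ a, mul_pos (Real.exp_pos _) ha⟩
  have hmono : Monovary (fun a => Real.exp (Q s a / β)) (Q s) :=
    (monovary_self (Q s)).comp_monotone_left
      (Real.exp_monotone.comp (monotone_div_right_of_nonneg hβ.le))
  have hcheb := (hmono.monovaryOn _).sum_mul_sum_le_sum_mul_sum (s := univ) fun a _ => hπ0 s a
  rw [hπ1 s, one_mul] at hcheb
  have hZ_eq : Z s = ∑ a, π s a * Real.exp (Q s a / β) :=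
    (hZ s).trans (sum_congr rfl fun a _ => mul_comm _ _)
  calc V s = Z s * (∑ a, π s a * Q s a) / Z s := by rw [hV, mul_div_cancel_left₀ _ hZ_pos.ne']
    _ ≤ (∑ a, π s a * (Real.exp (Q s a / β) * Q s a)) / Z s := by
        gcongr; rwa [hZ_eq]
    _ = ∑ a, πbar s a * Q s a := by
        rw [sum_div]; exact sum_congr rfl fun a _ => by rw [hπbar]; ring
end

section
/- Let P and P' be transition kernels on a finite MDP sharing reward r bounded by |r| ≤ R_max(1−γ), and let Q and Q' be the action-value functions of a fixed policy π under P and P' respectively. Then sup_{s,a} |Q(s,a) − Q'(s,a)| ≤ (R_max/(1−γ)) · sup_{s,a} Σ_{s'} |P(s'|s,a) − P'(s'|s,a)|. -/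
/-!
Writing `V` for the state values `∑ a, π s a * Q s a`, the Bellman equations give
`Q - Q' = γ (∑ (P - P') V' + ∑ P (V - V'))`. The first sum is at most `‖P - P'‖₁ · Rmax` by
Hölder, since `|Q'| ≤ Rmax`; the second is an average of `V - V'`, hence at most the sup-gap `ε`.
So `ε ≤ γ (Rmax · TV + ε)`, and solving for `ε` gives the bound. The same
"`x ≤ c + γ x` at the supremum" argument proves `|Q'| ≤ Rmax`.
-/

open Finset

theorem abs_sum_mul_le_sum_abs_mul {ι : Type*} {s : Finset ι} {u f : ι → ℝ} {M : ℝ}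
    (hf : ∀ i ∈ s, |f i| ≤ M) : |∑ i ∈ s, u i * f i| ≤ (∑ i ∈ s, |u i|) * M := by
  calc |∑ i ∈ s, u i * f i| ≤ ∑ i ∈ s, |u i| * |f i| := by
        simpa only [abs_mul] using abs_sum_le_sum_abs (fun i => u i * f i) s
    _ ≤ ∑ i ∈ s, |u i| * M :=
        sum_le_sum fun i hi => mul_le_mul_of_nonneg_left (hf i hi) (abs_nonneg _)
    _ = (∑ i ∈ s, |u i|) * M := (sum_mul _ _ _).symm

theorem abs_sum_mul_le_of_sum_eq_one {ι : Type*} {s : Finset ι} {w f : ι → ℝ} {M : ℝ}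
    (hw0 : ∀ i ∈ s, 0 ≤ w i) (hw1 : ∑ i ∈ s, w i = 1) (hf : ∀ i ∈ s, |f i| ≤ M) :
    |∑ i ∈ s, w i * f i| ≤ M := by
  have hw : ∑ i ∈ s, |w i| = 1 := by
    rw [← hw1]; exact sum_congr rfl fun i hi => abs_of_nonneg (hw0 i hi)
  simpa [hw] using abs_sum_mul_le_sum_abs_mul (u := w) hf

theorem ciSup_le_div_of_le_add_mul_ciSup {ι : Type*} [Nonempty ι] {f : ι → ℝ} {c γ : ℝ}
    (hγ : γ < 1) (h : ∀ i, f i ≤ c + γ * ⨆ j, f j) : ⨆ j, f j ≤ c / (1 - γ) := by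
  have := ciSup_le h
  rw [le_div_iff₀ (sub_pos.2 hγ)]
  linarith

section Bellman

variable {S A : Type*} [Fintype A]

def stateValue (π : S → A → ℝ) (Q : S → A → ℝ) (s : S) : ℝ := ∑ a, π s a * Q s a

theorem stateValue_sub (π Q Q' : S → A → ℝ) (s : S) :
    stateValue π Q s - stateValue π Q' s = stateValue π (Q - Q') s := by
  simp only [stateValue, Pi.sub_apply, mul_sub, sum_sub_distrib]

theorem abs_stateValue_le {π : S → A → ℝ} (hπ0 : ∀ s a, 0 ≤ π s a) (hπ1 : ∀ s, ∑ a, π s a = 1)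
    {Q : S → A → ℝ} {M : ℝ} (hQ : ∀ s a, |Q s a| ≤ M) (s : S) : |stateValue π Q s| ≤ M :=
  abs_sum_mul_le_of_sum_eq_one (fun a _ => hπ0 s a) (hπ1 s) fun a _ => hQ s a

theorem abs_le_div_of_bellman [Fintype S] [Nonempty S] [Nonempty A] (P : S → A → S → ℝ)
    (hP0 : ∀ s a s', 0 ≤ P s a s') (hP1 : ∀ s a, ∑ s', P s a s' = 1)
    (r : S → A → ℝ) {γ : ℝ} (hγ0 : 0 ≤ γ) (hγ1 : γ < 1) {R : ℝ} (hr : ∀ s a, |r s a| ≤ R)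
    {π : S → A → ℝ} (hπ0 : ∀ s a, 0 ≤ π s a) (hπ1 : ∀ s, ∑ a, π s a = 1) (Q : S → A → ℝ)
    (hBell : ∀ s a, Q s a = r s a + γ * ∑ s', P s a s' * stateValue π Q s') (s : S) (a : A) :
    |Q s a| ≤ R / (1 - γ) := by
  set M := ⨆ p : S × A, |Q p.1 p.2|
  have hM : ∀ s a, |Q s a| ≤ M := fun s a =>
    le_ciSup (Finite.bddAbove_range fun p : S × A => |Q p.1 p.2|) (s, a)
  refine (hM s a).trans (ciSup_le_div_of_le_add_mul_ciSup hγ1 fun p => ?_)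
  calc |Q p.1 p.2| ≤ |r p.1 p.2| + γ * |∑ s', P p.1 p.2 s' * stateValue π Q s'| := by
        rw [hBell]
        refine (abs_add_le _ _).trans_eq ?_
        rw [abs_mul, abs_of_nonneg hγ0]
    _ ≤ R + γ * M := by
        gcongr
        · exact hr _ _
        · exact abs_sum_mul_le_of_sum_eq_one (fun s' _ => hP0 _ _ s') (hP1 _ _)
            fun s' _ => abs_stateValue_le hπ0 hπ1 hM s'

theorem bellman_sub_eq [Fintype S] (P P' : S → A → S → ℝ) (r : S → A → ℝ) (γ : ℝ)
    (π Q Q' : S → A → ℝ)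
    (hBell : ∀ s a, Q s a = r s a + γ * ∑ s', P s a s' * stateValue π Q s')
    (hBell' : ∀ s a, Q' s a = r s a + γ * ∑ s', P' s a s' * stateValue π Q' s') (s : S) (a : A) :
    Q s a - Q' s a = γ * (∑ s', (P s a s' - P' s a s') * stateValue π Q' s' +
      ∑ s', P s a s' * stateValue π (Q - Q') s') := by
  simp only [← stateValue_sub, ← sum_add_distrib]
  rw [hBell, hBell', add_sub_add_left_eq_sub, ← mul_sub, ← sum_sub_distrib]
  congr 1
  exact sum_congr rfl fun s' _ => by ring

theorem abs_sub_le_of_bellman [Fintype S] (P P' : S → A → S → ℝ)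
    (hP0 : ∀ s a s', 0 ≤ P s a s') (hP1 : ∀ s a, ∑ s', P s a s' = 1)
    (r : S → A → ℝ) {γ : ℝ} (hγ0 : 0 ≤ γ)
    {π : S → A → ℝ} (hπ0 : ∀ s a, 0 ≤ π s a) (hπ1 : ∀ s, ∑ a, π s a = 1) (Q Q' : S → A → ℝ)
    (hBell : ∀ s a, Q s a = r s a + γ * ∑ s', P s a s' * stateValue π Q s')
    (hBell' : ∀ s a, Q' s a = r s a + γ * ∑ s', P' s a s' * stateValue π Q' s')
    {B ε : ℝ} (hQ' : ∀ s a, |Q' s a| ≤ B) (hε : ∀ s a, |Q s a - Q' s a| ≤ ε) (s : S) (a : A) :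
    |Q s a - Q' s a| ≤ γ * ((∑ s', |P s a s' - P' s a s'|) * B + ε) := by
  rw [bellman_sub_eq P P' r γ π Q Q' hBell hBell', abs_mul, abs_of_nonneg hγ0]
  gcongr
  refine (abs_add_le _ _).trans (add_le_add ?_ ?_)
  · exact abs_sum_mul_le_sum_abs_mul fun s' _ => abs_stateValue_le hπ0 hπ1 hQ' s'
  · exact abs_sum_mul_le_of_sum_eq_one (fun s' _ => hP0 s a s') (hP1 s a)
      fun s' _ => abs_stateValue_le hπ0 hπ1 hε s'

end Bellman

/-- The gap between Q-functions of the same policy under two transition kernels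
is controlled by the total-variation distance between the kernels. -/
theorem q_gap_bounded_by_kernel_tv {S A : Type*} [Fintype S] [Fintype A]
    [Nonempty S] [Nonempty A]
    (P P' : S → A → S → ℝ)
    (hP0 : ∀ s a s', 0 ≤ P s a s') (hP1 : ∀ s a, ∑ s', P s a s' = 1)
    (hP'0 : ∀ s a s', 0 ≤ P' s a s') (hP'1 : ∀ s a, ∑ s', P' s a s' = 1)
    (r : S → A → ℝ) (γ : ℝ) (hγ0 : 0 ≤ γ) (hγ1 : γ < 1)
    (Rmax : ℝ) (hr : ∀ s a, |r s a| ≤ Rmax * (1 - γ))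
    (π : S → A → ℝ) (hπ0 : ∀ s a, 0 ≤ π s a) (hπ1 : ∀ s, ∑ a, π s a = 1)
    (Q Q' : S → A → ℝ)
    (hBell : ∀ s a, Q s a = r s a + γ * ∑ s', P s a s' * ∑ a', π s' a' * Q s' a')
    (hBell' : ∀ s a, Q' s a = r s a + γ * ∑ s', P' s a s' * ∑ a', π s' a' * Q' s' a') :
    (⨆ p : S × A, |Q p.1 p.2 - Q' p.1 p.2|) ≤
      Rmax / (1 - γ) * ⨆ p : S × A, ∑ s', |P p.1 p.2 s' - P' p.1 p.2 s'| := by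
  have h1γ : 0 < 1 - γ := sub_pos.2 hγ1
  have hRmax : 0 ≤ Rmax := nonneg_of_mul_nonneg_left
    ((abs_nonneg _).trans (hr (Classical.arbitrary S) (Classical.arbitrary A))) h1γ
  have hQ' : ∀ s a, |Q' s a| ≤ Rmax := fun s a => by
    simpa [mul_div_cancel_right₀ _ h1γ.ne'] using
      abs_le_div_of_bellman P' hP'0 hP'1 r hγ0 hγ1 hr hπ0 hπ1 Q' hBell' s a
  set D := ⨆ p : S × A, ∑ s', |P p.1 p.2 s' - P' p.1 p.2 s'|
  have hD : ∀ p : S × A, ∑ s', |P p.1 p.2 s' - P' p.1 p.2 s'| ≤ D :=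
    le_ciSup (Finite.bddAbove_range _)
  have hD0 : 0 ≤ D := (sum_nonneg fun _ _ => abs_nonneg _).trans (hD (Classical.arbitrary _))
  have hgap : ∀ s a, |Q s a - Q' s a| ≤ ⨆ p : S × A, |Q p.1 p.2 - Q' p.1 p.2| := fun s a =>
    le_ciSup (Finite.bddAbove_range fun p : S × A => |Q p.1 p.2 - Q' p.1 p.2|) (s, a)
  rw [div_mul_eq_mul_div]
  refine ciSup_le_div_of_le_add_mul_ciSup hγ1 fun p => ?_
  have hstep :=
    abs_sub_le_of_bellman P P' hP0 hP1 r hγ0 hπ0 hπ1 Q Q' hBell hBell' hQ' hgap p.1 p.2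
  have hTV : (∑ s', |P p.1 p.2 s' - P' p.1 p.2 s'|) * Rmax ≤ Rmax * D := by
    rw [mul_comm]; exact mul_le_mul_of_nonneg_left (hD p) hRmax
  nlinarith [mul_nonneg hRmax hD0]
end

section
/- Let Q^π be the action-value function of policy π in a finite discounted MDP, and let ε(s,a) = Q^π_M(s,a) − Q^π_B(s,a) denote the difference of Q-functions of the same policy under two transition kernels P_M and P_B. Then ε satisfies the fixed-point identity ε(s,a) = Σ_{s'} (P_M(s'|s,a) − P_B(s'|s,a)) (r(s,a) + γ V^π_B(s')) + γ Σ_{s'} P_M(s'|s,a) Σ_{a'} π(a'|s') ε(s',a'). -/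
/-! Subtract the two Bellman equations. The rewards cancel against `Σ (P_M - P_B) r = 0`, since
both kernels have total mass one, and `γ Σ P_M V_M - γ Σ P_B V_B` splits as
`γ Σ (P_M - P_B) V_B + γ Σ P_M (V_M - V_B)`, where `V_M - V_B` is the `π`-average of `ε`. -/

open Finset

theorem sum_sub_mul_const_add_eq {ι : Type*} [Fintype ι] {p q : ι → ℝ}
    (hpq : ∑ i, p i = ∑ i, q i) (c : ℝ) (f : ι → ℝ) :
    ∑ i, (p i - q i) * (c + f i) = ∑ i, p i * f i - ∑ i, q i * f i := by
  have hc : ∑ i, (p i - q i) * c = 0 := by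
    rw [← sum_mul, sum_sub_distrib, hpq, sub_self, zero_mul]
  simp only [mul_add, sum_add_distrib]
  rw [hc, zero_add]
  simp only [sub_mul, sum_sub_distrib]

theorem q_difference_fixed_point_general {S A : Type*} [Fintype S] [Fintype A]
    (PM PB : S → A → S → ℝ)
    (hPM1 : ∀ s a, ∑ s', PM s a s' = 1)
    (hPB1 : ∀ s a, ∑ s', PB s a s' = 1)
    (r : S → A → ℝ) (γ : ℝ)
    (π : S → A → ℝ)
    (QM QB : S → A → ℝ) (VB : S → ℝ)
    (hVB : ∀ s, VB s = ∑ a, π s a * QB s a)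
    (hBellM : ∀ s a, QM s a = r s a + γ * ∑ s', PM s a s' * ∑ a', π s' a' * QM s' a')
    (hBellB : ∀ s a, QB s a = r s a + γ * ∑ s', PB s a s' * VB s')
    (ε : S → A → ℝ) (hε : ∀ s a, ε s a = QM s a - QB s a) :
    ∀ s a, ε s a =
      (∑ s', (PM s a s' - PB s a s') * (r s a + γ * VB s')) +
        γ * ∑ s', PM s a s' * ∑ a', π s' a' * ε s' a' := by
  intro s a
  have hπε : ∀ s', ∑ a', π s' a' * ε s' a' = ∑ a', π s' a' * QM s' a' - VB s' := by
    intro s'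
    simp only [hVB, hε, mul_sub, sum_sub_distrib]
  have hPMε : ∑ s', PM s a s' * ∑ a', π s' a' * ε s' a' =
      ∑ s', PM s a s' * ∑ a', π s' a' * QM s' a' - ∑ s', PM s a s' * VB s' := by
    simp only [hπε, mul_sub, sum_sub_distrib]
  rw [sum_sub_mul_const_add_eq ((hPM1 s a).trans (hPB1 s a).symm), hPMε, hε, hBellM, hBellB]
  simp only [mul_left_comm _ γ, ← mul_sum]
  ring

/-- Fixed-point identity for the difference of Q-functions of the same policy
under two transition kernels (Lemma 1 of Fujimoto et al.). -/
theorem q_difference_fixed_point {S A : Type*} [Fintype S] [Fintype A]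
    (PM PB : S → A → S → ℝ)
    (hPM0 : ∀ s a s', 0 ≤ PM s a s') (hPM1 : ∀ s a, ∑ s', PM s a s' = 1)
    (hPB0 : ∀ s a s', 0 ≤ PB s a s') (hPB1 : ∀ s a, ∑ s', PB s a s' = 1)
    (r : S → A → ℝ) (γ : ℝ) (hγ0 : 0 ≤ γ) (hγ1 : γ < 1)
    (π : S → A → ℝ) (hπ0 : ∀ s a, 0 ≤ π s a) (hπ1 : ∀ s, ∑ a, π s a = 1)
    (QM QB : S → A → ℝ) (VB : S → ℝ)
    (hVB : ∀ s, VB s = ∑ a, π s a * QB s a)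
    (hBellM : ∀ s a, QM s a = r s a + γ * ∑ s', PM s a s' * ∑ a', π s' a' * QM s' a')
    (hBellB : ∀ s a, QB s a = r s a + γ * ∑ s', PB s a s' * VB s')
    (ε : S → A → ℝ) (hε : ∀ s a, ε s a = QM s a - QB s a) :
    ∀ s a, ε s a =
      (∑ s', (PM s a s' - PB s a s') * (r s a + γ * VB s')) +
        γ * ∑ s', PM s a s' * ∑ a', π s' a' * ε s' a' :=
  q_difference_fixed_point_general PM PB hPM1 hPB1 r γ π QM QB VB hVB hBellM hBellB ε hε
end
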